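/- Let f : R^n → R ∪ {+∞} be proper, lsc, σ-strongly convex (σ ≥ 0), A : R^n → R^m linear, b ∈ R^m, λ ∈ R^m, z ∈ R^n, ρ_t, τ_t > 0 with ρ_t = ρ τ_t, and M a symmetric matrix with M - ρ AᵀA positive semi-definite. Let z⁺ be a minimizer of ξ ↦ f(ξ) + ⟨λ, Aξ - b⟩ + ρ_t ⟨Az - b, Aξ⟩ + (τ_t/2)‖ξ - z‖_M². Then for every ξ with Aξ = b: f(z⁺) + ⟨λ, Az⁺ - b⟩ + (ρ_t/2)‖Az⁺ - b‖² - f(ξ) ≤ (τ_t/2)(‖ξ - z‖_P² - ‖ξ - z⁺‖_P²) - (τ_t/2)‖z⁺ - z‖_P² - (σ/2)‖ξ - z⁺‖² - (ρ_t/2)‖Az⁺ - b‖², where P = M - ρ AᵀA. -/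

import Mathlib

/-!
The objective `φ` of the primal step is the sum of the `σ`-strongly convex `f`, an affine function
and the quadratic `(τ_t/2)‖· - z‖²_M`. Along every segment each summand satisfies
`φ (s x + t y) ≤ s φ x + t φ y - s t c` with `c = (σ/2)‖x - y‖² + (τ_t/2)‖x - y‖²_M` (for the
quadratic with equality), and at a minimizer `y` letting `s → 0` gives `φ y + c ≤ φ x`. For feasible `ξ` the linearized penalty `ρ_t ⟪Az - b, Az⁺ - Aξ⟫` is then expanded by
the three-point identity, which trades `M` for `P = M - ρ AᵀA`.
-/

open RealInnerProductSpace

open Filter Set Topology in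
theorem add_le_of_minimizer_of_le_smul_add_smul {E : Type*} [AddCommGroup E] [Module ℝ E]
    {φ : E → ℝ} {x y : E} {c : ℝ} (hy : ∀ w, φ y ≤ φ w)
    (hφ : ∀ s t : ℝ, 0 < s → 0 < t → s + t = 1 →
      φ (s • x + t • y) ≤ s * φ x + t * φ y - s * t * c) :
    φ y + c ≤ φ x := by
  have hbound : ∀ s ∈ Ioo (0 : ℝ) 1, (1 - s) * c ≤ φ x - φ y := fun s ⟨hs0, hs1⟩ => by
    have h := (hy _).trans (hφ s (1 - s) hs0 (sub_pos.mpr hs1) (add_sub_cancel s 1))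
    have : s * ((1 - s) * c) ≤ s * (φ x - φ y) := by linarith
    exact le_of_mul_le_mul_left this hs0
  have hlim : Tendsto (fun s : ℝ => (1 - s) * c) (𝓝[>] 0) (𝓝 c) := by
    have : Tendsto (fun s : ℝ => (1 - s) * c) (𝓝 0) (𝓝 ((1 - 0) * c)) :=
      (tendsto_const_nhds.sub tendsto_id).mul tendsto_const_nhds
    rw [sub_zero, one_mul] at this
    exact this.mono_left nhdsWithin_le_nhds
  have := le_of_tendsto hlim (eventually_of_mem (Ioo_mem_nhdsGT one_pos) hbound)
  linarith

theorem inner_map_sub_self_smul_add_smul {E : Type*} [NormedAddCommGroup E]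
    [InnerProductSpace ℝ E] (M : E →ₗ[ℝ] E) {s t : ℝ} (hst : s + t = 1) (x y z : E) :
    ⟪s • x + t • y - z, M (s • x + t • y - z)⟫
      = s * ⟪x - z, M (x - z)⟫ + t * ⟪y - z, M (y - z)⟫ - s * t * ⟪x - y, M (x - y)⟫ := by
  obtain rfl := eq_sub_of_add_eq' hst
  simp only [map_add, map_sub, map_smul, inner_add_left, inner_add_right, inner_sub_left,
    inner_sub_right, real_inner_smul_left, real_inner_smul_right]
  ring

theorem inner_sub_map_sub_map_eq {E F : Type*} [AddCommGroup E] [Module ℝ E]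
    [NormedAddCommGroup F] [InnerProductSpace ℝ F] (A : E →ₗ[ℝ] F) {b : F} {ξ : E}
    (hξ : A ξ = b) (z z' : E) :
    ⟪A z - b, A z' - A ξ⟫ = ‖A z' - b‖ ^ 2 + (‖A (ξ - z)‖ ^ 2 - ‖A (ξ - z')‖ ^ 2) / 2
      - ‖A (z' - z)‖ ^ 2 / 2 := by
  have h₁ : A (ξ - z) = -(A z - b) := by rw [map_sub, hξ, neg_sub]
  have h₂ : A (ξ - z') = -(A z' - b) := by rw [map_sub, hξ, neg_sub]
  have h₃ : A (z' - z) = (A z' - b) - (A z - b) := by rw [map_sub, sub_sub_sub_cancel_right]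
  rw [h₁, h₂, h₃, hξ, norm_neg, norm_neg]
  generalize A z - b = u
  generalize A z' - b = v
  rw [norm_sub_sq_real, real_inner_comm]
  ring

theorem proximal_linearized_AL_is_nice_general (n m : ℕ)
    (f : EuclideanSpace ℝ (Fin n) → ℝ) (σ : ℝ)
    (hfsc : ConvexOn ℝ Set.univ (fun x => f x - σ / 2 * ‖x‖ ^ 2))
    (A : EuclideanSpace ℝ (Fin n) →ₗ[ℝ] EuclideanSpace ℝ (Fin m))
    (b lam : EuclideanSpace ℝ (Fin m))
    (z zplus : EuclideanSpace ℝ (Fin n))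
    (ρ ρt τt : ℝ) (hρt : ρt = ρ * τt)
    (M : EuclideanSpace ℝ (Fin n) →ₗ[ℝ] EuclideanSpace ℝ (Fin n))
    (hmin : ∀ ξ,
      f zplus + ⟪lam, A zplus - b⟫ + ρt * ⟪A z - b, A zplus⟫
          + (τt / 2) * ⟪zplus - z, M (zplus - z)⟫ ≤
        f ξ + ⟪lam, A ξ - b⟫ + ρt * ⟪A z - b, A ξ⟫
          + (τt / 2) * ⟪ξ - z, M (ξ - z)⟫) :
    ∀ ξ, A ξ = b →
      f zplus + ⟪lam, A zplus - b⟫ + (ρt / 2) * ‖A zplus - b‖ ^ 2 - f ξ ≤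
        (τt / 2) * ((⟪ξ - z, M (ξ - z)⟫ - ρ * ‖A (ξ - z)‖ ^ 2)
            - (⟪ξ - zplus, M (ξ - zplus)⟫ - ρ * ‖A (ξ - zplus)‖ ^ 2))
          - (τt / 2) * (⟪zplus - z, M (zplus - z)⟫ - ρ * ‖A (zplus - z)‖ ^ 2)
          - (σ / 2) * ‖ξ - zplus‖ ^ 2
          - (ρt / 2) * ‖A zplus - b‖ ^ 2 := by
  intro ξ hξ
  have hf : StrongConvexOn Set.univ σ f := strongConvexOn_iff_convex.mpr hfsc
  have hgrowth := add_le_of_minimizer_of_le_smul_add_smul (x := ξ)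
    (φ := fun w => f w + ⟪lam, A w - b⟫ + ρt * ⟪A z - b, A w⟫ + (τt / 2) * ⟪w - z, M (w - z)⟫)
    (c := σ / 2 * ‖ξ - zplus‖ ^ 2 + τt / 2 * ⟪ξ - zplus, M (ξ - zplus)⟫) hmin
    fun s t hs ht hst => by
      have hfcombo := hf.2 (Set.mem_univ ξ) (Set.mem_univ zplus) hs.le ht.le hst
      have hq := inner_map_sub_self_smul_add_smul M hst ξ zplus z
      obtain rfl := eq_sub_of_add_eq' hst
      have hAff : A (s • ξ + (1 - s) • zplus) - b = s • (A ξ - b) + (1 - s) • (A zplus - b) := by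
        rw [map_add, map_smul, map_smul]; module
      rw [hAff]
      simp only [map_add, map_smul, inner_add_right, real_inner_smul_right,
        smul_eq_mul] at hfcombo ⊢
      linear_combination hfcombo + τt / 2 * hq
  have hthreePoint := inner_sub_map_sub_map_eq A hξ z zplus
  simp only [hξ, sub_self, inner_zero_right] at hgrowth
  rw [inner_sub_right, hξ] at hthreePoint
  subst hρt
  linear_combination hgrowth - ρ * τt * hthreePoint

/-- Lemma 5.2: the Proximal Linearized Augmented Lagrangian primal map is nice,
with `δ = 1` and `P = Q = M - ρ AᵀA ⪰ 0` (here `‖x‖_P² = ⟪x, M x⟫ - ρ‖A x‖²`). -/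
theorem proximal_linearized_AL_is_nice (n m : ℕ)
    (f : EuclideanSpace ℝ (Fin n) → ℝ) (σ : ℝ) (hσ : 0 ≤ σ)
    (hflsc : LowerSemicontinuous f)
    (hfsc : ConvexOn ℝ Set.univ (fun x => f x - σ / 2 * ‖x‖ ^ 2))
    (A : EuclideanSpace ℝ (Fin n) →ₗ[ℝ] EuclideanSpace ℝ (Fin m))
    (b lam : EuclideanSpace ℝ (Fin m))
    (z zplus : EuclideanSpace ℝ (Fin n))
    (ρ ρt τt : ℝ) (hρ : 0 < ρ) (hτt : 0 < τt) (hρt : ρt = ρ * τt)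
    (M : EuclideanSpace ℝ (Fin n) →ₗ[ℝ] EuclideanSpace ℝ (Fin n))
    (hMsym : ∀ x y, ⟪M x, y⟫ = ⟪x, M y⟫)
    (hPpsd : ∀ x, 0 ≤ ⟪x, M x⟫ - ρ * ‖A x‖ ^ 2)
    (hmin : ∀ ξ,
      f zplus + ⟪lam, A zplus - b⟫ + ρt * ⟪A z - b, A zplus⟫
          + (τt / 2) * ⟪zplus - z, M (zplus - z)⟫ ≤
        f ξ + ⟪lam, A ξ - b⟫ + ρt * ⟪A z - b, A ξ⟫
          + (τt / 2) * ⟪ξ - z, M (ξ - z)⟫) :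
    ∀ ξ, A ξ = b →
      f zplus + ⟪lam, A zplus - b⟫ + (ρt / 2) * ‖A zplus - b‖ ^ 2 - f ξ ≤
        (τt / 2) * ((⟪ξ - z, M (ξ - z)⟫ - ρ * ‖A (ξ - z)‖ ^ 2)
            - (⟪ξ - zplus, M (ξ - zplus)⟫ - ρ * ‖A (ξ - zplus)‖ ^ 2))
          - (τt / 2) * (⟪zplus - z, M (zplus - z)⟫ - ρ * ‖A (zplus - z)‖ ^ 2)
          - (σ / 2) * ‖ξ - zplus‖ ^ 2
          - (ρt / 2) * ‖A zplus - b‖ ^ 2 :=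
  proximal_linearized_AL_is_nice_general n m f σ hfsc A b lam z zplus ρ ρt τt hρt M hmin
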